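/- For ε ∈ (0,1] let A_ε ⊆ ℝⁿ and let (x_ε) be a ρ-moderate net of points of ℝⁿ. Then: (1) [x_ε] ∈ [A_ε] if and only if for every q ∈ ℝ_{>0} one has d(x_ε, A_ε) ≤ ρ_ε^q for ε small (equivalently, the net of distances (d(x_ε, A_ε)) is ρ-equivalent to 0); (2) [x_ε] ∈ ⟨A_ε⟩ if and only if there exists q ∈ ℝ_{>0} such that d(x_ε, ℝⁿ∖A_ε) > ρ_ε^q for ε small. -/
import Mathlib


noncomputable section

open Set Filter Topology MeasureTheory

/-- The index set predicate: `ε ∈ (0,1]`. -/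
def II (ε : ℝ) : Prop := 0 < ε ∧ ε ≤ 1

/-- A property `P ε` holds "for `ε` small". -/
def EvSmall (P : ℝ → Prop) : Prop :=
  ∃ ε₀ : ℝ, 0 < ε₀ ∧ ε₀ ≤ 1 ∧ ∀ ε : ℝ, 0 < ε → ε ≤ ε₀ → P ε

/-- A gauge: a net `ρ` with values in `(0,1]` tending to `0` as `ε → 0⁺`. -/
structure IsGauge (ρ : ℝ → ℝ) : Prop where
  pos : ∀ ε, II ε → 0 < ρ ε
  le_one : ∀ ε, II ε → ρ ε ≤ 1
  tendsto_zero : Filter.Tendsto ρ (nhdsWithin 0 (Set.Ioi 0)) (nhds 0)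

/-- A `ρ`-moderate net with values in a normed space. -/
def Moderate (ρ : ℝ → ℝ) {E : Type*} [NormedAddCommGroup E] (x : ℝ → E) : Prop :=
  ∃ N : ℕ, EvSmall (fun ε => ‖x ε‖ ≤ ρ ε ^ (-(N : ℤ)))

/-- `ρ`-equivalence of nets. -/
def REquiv (ρ : ℝ → ℝ) {E : Type*} [NormedAddCommGroup E] (x y : ℝ → E) : Prop :=
  ∀ m : ℕ, EvSmall (fun ε => ‖x ε - y ε‖ ≤ ρ ε ^ m)

/-- The type of `ρ`-moderate nets. -/
abbrev ModNet (ρ : ℝ → ℝ) (E : Type*) [NormedAddCommGroup E] : Type _ :=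
  {x : ℝ → E // Moderate ρ x}

/-- The Robinson–Colombeau ring of generalized points `⟨ρ⟩E`. -/
def RC (ρ : ℝ → ℝ) (E : Type*) [NormedAddCommGroup E] : Type _ :=
  Quot (fun x y : ModNet ρ E => REquiv ρ x.1 y.1)

/-- The class `[x_ε]` of a moderate net. -/
def RC.mk {ρ : ℝ → ℝ} {E : Type*} [NormedAddCommGroup E] (x : ModNet ρ E) : RC ρ E :=
  Quot.mk _ x

theorem moderate_const_zero (ρ : ℝ → ℝ) {E : Type*} [NormedAddCommGroup E] :
    Moderate ρ (fun _ : ℝ => (0 : E)) := by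
  refine ⟨0, 1, one_pos, le_rfl, fun ε _ _ => ?_⟩
  simp

/-- The zero generalized point. -/
def RC.zero (ρ : ℝ → ℝ) (E : Type*) [NormedAddCommGroup E] : RC ρ E :=
  RC.mk ⟨fun _ => 0, moderate_const_zero ρ⟩

/-- The order: `x ≤ y` iff there are representatives with `x_ε ≤ y_ε` for all `ε`. -/
def RC.Le {ρ : ℝ → ℝ} (x y : RC ρ ℝ) : Prop :=
  ∃ a b : ModNet ρ ℝ, RC.mk a = x ∧ RC.mk b = y ∧ ∀ ε, II ε → a.1 ε ≤ b.1 ε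

/-- `x` is invertible in the ring `⟨ρ⟩ℝ`. -/
def RC.IsInvertible {ρ : ℝ → ℝ} (x : RC ρ ℝ) : Prop :=
  ∃ a : ModNet ρ ℝ, RC.mk a = x ∧
    ∃ b : ℝ → ℝ, Moderate ρ b ∧ REquiv ρ (fun ε => a.1 ε * b ε) (fun _ => (1 : ℝ))

/-- `r` is a nonnegative invertible generalized number, i.e. `r > 0`. -/
def RC.PosInv {ρ : ℝ → ℝ} (r : RC ρ ℝ) : Prop :=
  RC.IsInvertible r ∧ RC.Le (RC.zero ρ ℝ) r

/-- Strict order: `x < y` iff some nonnegative invertible `r` satisfies `r ≤ y - x`. -/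
def RC.Lt {ρ : ℝ → ℝ} (x y : RC ρ ℝ) : Prop :=
  ∃ r : RC ρ ℝ, RC.PosInv r ∧
    ∃ a b c : ModNet ρ ℝ, RC.mk a = x ∧ RC.mk b = y ∧ RC.mk c = r ∧
      ∀ ε, II ε → c.1 ε ≤ b.1 ε - a.1 ε

/-- `≤` between (the classes of) two scalar nets: `u ≤ v + z` for some negligible `z`. -/
def NetLe (ρ : ℝ → ℝ) (u v : ℝ → ℝ) : Prop :=
  ∃ z : ℝ → ℝ, REquiv ρ z (fun _ => (0 : ℝ)) ∧ EvSmall (fun ε => u ε ≤ v ε + z ε)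

/-- `|y - x| < r` in `⟨ρ⟩E`. -/
def NormLt {ρ : ℝ → ℝ} {E : Type*} [NormedAddCommGroup E]
    (x y : RC ρ E) (r : RC ρ ℝ) : Prop :=
  ∃ s : RC ρ ℝ, RC.PosInv s ∧
    ∃ a b : ModNet ρ E, ∃ c d : ModNet ρ ℝ,
      RC.mk a = x ∧ RC.mk b = y ∧ RC.mk c = r ∧ RC.mk d = s ∧
      ∀ ε, II ε → d.1 ε ≤ c.1 ε - ‖b.1 ε - a.1 ε‖

/-- The sharp ball `B_r(x)`. -/
def sharpBall {ρ : ℝ → ℝ} {E : Type*} [NormedAddCommGroup E]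
    (x : RC ρ E) (r : RC ρ ℝ) : Set (RC ρ E) :=
  {y | NormLt x y r}

/-- The sharp topology, generated by the balls with invertible positive radius. -/
def sharpTopology (ρ : ℝ → ℝ) (E : Type*) [NormedAddCommGroup E] :
    TopologicalSpace (RC ρ E) :=
  TopologicalSpace.generateFrom {S | ∃ x r, RC.PosInv r ∧ S = sharpBall x r}

/-- The internal set `[A_ε]`. -/
def InternalSet (ρ : ℝ → ℝ) {E : Type*} [NormedAddCommGroup E]
    (A : ℝ → Set E) : Set (RC ρ E) :=
  {x | ∃ a : ModNet ρ E, RC.mk a = x ∧ EvSmall (fun ε => a.1 ε ∈ A ε)}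

/-- The strongly internal set `⟨A_ε⟩`. -/
def StrongSet (ρ : ℝ → ℝ) {E : Type*} [NormedAddCommGroup E]
    (A : ℝ → Set E) : Set (RC ρ E) :=
  {x | ∀ a : ModNet ρ E, RC.mk a = x → EvSmall (fun ε => a.1 ε ∈ A ε)}

/-- Euclidean `ℝⁿ`. -/
abbrev RVec (n : ℕ) := EuclideanSpace ℝ (Fin n)

/-- Partial derivative in the `i`-th coordinate direction. -/
def pderivI {n : ℕ} {F : Type*} [NormedAddCommGroup F] [NormedSpace ℝ F]
    (i : Fin n) (f : RVec n → F) : RVec n → F :=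
  fun x => fderiv ℝ f x (EuclideanSpace.single i 1)

/-- The multi-index partial derivative `∂^α`. -/
def pderivM {n : ℕ} {F : Type*} [NormedAddCommGroup F] [NormedSpace ℝ F]
    (α : Fin n → ℕ) (f : RVec n → F) : RVec n → F :=
  (List.finRange n).foldr (fun i g => (pderivI i)^[α i] g) f

/-- A net of smooth functions `f_ε ∈ C^∞(Ω_ε, F)` defining a generalized smooth
function of type `X → Y`. -/
structure DefinesGSF (ρ : ℝ → ℝ) {n : ℕ} {F : Type*} [NormedAddCommGroup F]
    [NormedSpace ℝ F] (Ω : ℝ → Set (RVec n)) (f : ℝ → RVec n → F)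
    (X : Set (RC ρ (RVec n))) (Y : Set (RC ρ F)) : Prop where
  open' : ∀ ε, II ε → IsOpen (Ω ε)
  smooth : ∀ ε, II ε → ContDiffOn ℝ (⊤ : ℕ∞) (f ε) (Ω ε)
  domain : X ⊆ StrongSet ρ Ω
  val_mod : ∀ a : ModNet ρ (RVec n), RC.mk a ∈ X → Moderate ρ (fun ε => f ε (a.1 ε))
  val_mem : ∀ a : ModNet ρ (RVec n), RC.mk a ∈ X →
    ∀ hm : Moderate ρ (fun ε => f ε (a.1 ε)), RC.mk ⟨_, hm⟩ ∈ Y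
  deriv_mod : ∀ a : ModNet ρ (RVec n), RC.mk a ∈ X → ∀ α : Fin n → ℕ,
    Moderate ρ (fun ε => pderivM α (f ε) (a.1 ε))

/-- `f : X → Y` is a generalized smooth function. -/
def IsGSFOn (ρ : ℝ → ℝ) {n : ℕ} {F : Type*} [NormedAddCommGroup F] [NormedSpace ℝ F]
    (f : RC ρ (RVec n) → RC ρ F) (X : Set (RC ρ (RVec n))) (Y : Set (RC ρ F)) : Prop :=
  ∃ Ω fn, DefinesGSF ρ Ω fn X Y ∧
    ∀ a : ModNet ρ (RVec n), RC.mk a ∈ X →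
      ∀ hm : Moderate ρ (fun ε => fn ε (a.1 ε)), f (RC.mk a) = RC.mk ⟨_, hm⟩

/-- One-dimensional version: a net of smooth functions `f_ε ∈ C^∞(Ω_ε, ℝ)`,
`Ω_ε ⊆ ℝ`, defining a generalized smooth function of type `X → Y`. -/
structure DefinesGSF1 (ρ : ℝ → ℝ) (Ω : ℝ → Set ℝ) (f : ℝ → ℝ → ℝ)
    (X Y : Set (RC ρ ℝ)) : Prop where
  open' : ∀ ε, II ε → IsOpen (Ω ε)
  smooth : ∀ ε, II ε → ContDiffOn ℝ (⊤ : ℕ∞) (f ε) (Ω ε)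
  domain : X ⊆ StrongSet ρ Ω
  val_mod : ∀ a : ModNet ρ ℝ, RC.mk a ∈ X → Moderate ρ (fun ε => f ε (a.1 ε))
  val_mem : ∀ a : ModNet ρ ℝ, RC.mk a ∈ X →
    ∀ hm : Moderate ρ (fun ε => f ε (a.1 ε)), RC.mk ⟨_, hm⟩ ∈ Y
  deriv_mod : ∀ a : ModNet ρ ℝ, RC.mk a ∈ X → ∀ k : ℕ,
    Moderate ρ (fun ε => iteratedDeriv k (f ε) (a.1 ε))

/-- `f : X → Y` (`X, Y ⊆ ⟨ρ⟩ℝ`) is a generalized smooth function. -/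
def IsGSFOn1 (ρ : ℝ → ℝ) (f : RC ρ ℝ → RC ρ ℝ) (X Y : Set (RC ρ ℝ)) : Prop :=
  ∃ Ω fn, DefinesGSF1 ρ Ω fn X Y ∧
    ∀ a : ModNet ρ ℝ, RC.mk a ∈ X →
      ∀ hm : Moderate ρ (fun ε => fn ε (a.1 ε)), f (RC.mk a) = RC.mk ⟨_, hm⟩

/-- The interval `[a,b] ⊆ ⟨ρ⟩ℝ`. -/
def RCIcc {ρ : ℝ → ℝ} (a b : RC ρ ℝ) : Set (RC ρ ℝ) := {x | RC.Le a x ∧ RC.Le x b}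

/-- The interval `(a,b) ⊆ ⟨ρ⟩ℝ`. -/
def RCIoo {ρ : ℝ → ℝ} (a b : RC ρ ℝ) : Set (RC ρ ℝ) := {x | RC.Lt a x ∧ RC.Lt x b}

/-- A sharply bounded net of sets. -/
def SharplyBdd (ρ : ℝ → ℝ) {E : Type*} [NormedAddCommGroup E] (A : ℝ → Set E) : Prop :=
  ∃ N : ℕ, EvSmall (fun ε => ∀ y ∈ A ε, ‖y‖ ≤ ρ ε ^ (-(N : ℤ)))


section Helpers

variable {ρ : ℝ → ℝ}

lemma evsmall_mono {P Q : ℝ → Prop} (h : EvSmall P)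
    (hpq : ∀ ε, 0 < ε → ε ≤ 1 → P ε → Q ε) : EvSmall Q := by
  obtain ⟨ε₀, h0, h1, hP⟩ := h
  exact ⟨ε₀, h0, h1, fun ε hε hε' => hpq ε hε (hε'.trans h1) (hP ε hε hε')⟩

lemma evsmall_and {P Q : ℝ → Prop} (hP : EvSmall P) (hQ : EvSmall Q) :
    EvSmall (fun ε => P ε ∧ Q ε) := by
  obtain ⟨a, a0, a1, hP⟩ := hP
  obtain ⟨b, b0, b1, hQ⟩ := hQ
  exact ⟨min a b, lt_min a0 b0, (min_le_left a b).trans a1,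
    fun ε hε hε' => ⟨hP ε hε (hε'.trans (min_le_left _ _)),
      hQ ε hε (hε'.trans (min_le_right _ _))⟩⟩

lemma gauge_lt (hρ : IsGauge ρ) {c : ℝ} (hc : 0 < c) : EvSmall fun ε => ρ ε < c := by
  have h := hρ.tendsto_zero.eventually_lt_const hc
  rw [eventually_nhdsWithin_iff, Metric.eventually_nhds_iff] at h
  obtain ⟨δ, hδ, h⟩ := h
  refine ⟨min (δ/2) 1, by positivity, min_le_right _ _, fun ε hε hε' => ?_⟩
  refine h ?_ hε
  rw [Real.dist_eq, sub_zero, abs_of_pos hε]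
  exact lt_of_le_of_lt (hε'.trans (min_le_left _ _)) (by linarith)

lemma evsmall_le {c : ℝ} (hc : 0 < c) : EvSmall fun ε => ε ≤ c :=
  ⟨min c 1, lt_min hc one_pos, min_le_right _ _,
    fun ε _ hε' => hε'.trans (min_le_left _ _)⟩

lemma two_pow_succ_le {r : ℝ} (h0 : 0 < r) (h : r < 1/2) (m : ℕ) :
    r ^ (m+1) + r ^ (m+1) ≤ r ^ m := by
  have h1 : (0:ℝ) < r ^ m := pow_pos h0 m
  have h2 : r ^ (m+1) = r ^ m * r := pow_succ r m
  nlinarith [mul_nonneg h1.le (by linarith : (0:ℝ) ≤ 1 - 2*r)]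

lemma requiv_refl (hρ : IsGauge ρ) {E : Type*} [NormedAddCommGroup E] (u : ℝ → E) :
    REquiv ρ u u := by
  intro m
  exact ⟨1, one_pos, le_rfl, fun ε hε hε' => by
    have := hρ.pos ε ⟨hε, hε'⟩
    simp only [sub_self, norm_zero]
    positivity⟩

lemma requiv_symm {E : Type*} [NormedAddCommGroup E] {u v : ℝ → E}
    (h : REquiv ρ u v) : REquiv ρ v u := by
  intro m
  exact evsmall_mono (h m) (fun ε _ _ hh => by rwa [norm_sub_rev])

lemma requiv_trans (hρ : IsGauge ρ) {E : Type*} [NormedAddCommGroup E] {u v w : ℝ → E}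
    (h1 : REquiv ρ u v) (h2 : REquiv ρ v w) : REquiv ρ u w := by
  intro m
  refine evsmall_mono
    (evsmall_and (evsmall_and (h1 (m+1)) (h2 (m+1))) (gauge_lt hρ (by norm_num : (0:ℝ) < 1/2)))
    ?_
  rintro ε hε hε' ⟨⟨ha, hb⟩, hc⟩
  have hρε : 0 < ρ ε := hρ.pos ε ⟨hε, hε'⟩
  calc ‖u ε - w ε‖ ≤ ‖u ε - v ε‖ + ‖v ε - w ε‖ := norm_sub_le_norm_sub_add_norm_sub _ _ _
    _ ≤ ρ ε ^ (m+1) + ρ ε ^ (m+1) := add_le_add ha hb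
    _ ≤ ρ ε ^ m := two_pow_succ_le hρε hc m

lemma rc_exact (hρ : IsGauge ρ) {E : Type*} [NormedAddCommGroup E] {a b : ModNet ρ E}
    (h : RC.mk a = RC.mk b) : REquiv ρ a.1 b.1 := by
  have h' := Quot.eqvGen_exact h
  clear h
  induction h' with
  | rel x y hxy => exact hxy
  | refl x => exact requiv_refl hρ _
  | symm x y _ ih => exact requiv_symm ih
  | trans x y z _ _ ih1 ih2 => exact requiv_trans hρ ih1 ih2

lemma zpow_bound {r : ℝ} (h0 : 0 < r) (h : r < 1/2) (N : ℕ) :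
    r ^ (-(N:ℤ)) + 1 ≤ r ^ (-((N+1:ℕ):ℤ)) := by
  rw [zpow_neg, zpow_neg, zpow_natCast, zpow_natCast]
  have h1 : (0:ℝ) < r ^ N := pow_pos h0 N
  have h2 : r ^ N ≤ 1 := pow_le_one₀ h0.le (by linarith)
  have h3 : (1:ℝ) ≤ (r ^ N)⁻¹ := (one_le_inv₀ h1).2 h2
  have h4 : (2:ℝ) ≤ r⁻¹ := by
    rw [show (2:ℝ) = (1/2)⁻¹ by norm_num]
    exact inv_anti₀ h0 h.le
  calc (r ^ N)⁻¹ + 1 ≤ (r ^ N)⁻¹ + (r ^ N)⁻¹ := by linarith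
    _ = 2 * (r ^ N)⁻¹ := by ring
    _ ≤ r⁻¹ * (r ^ N)⁻¹ := by
        have := inv_pos.2 h1
        nlinarith
    _ = (r ^ (N+1))⁻¹ := by rw [pow_succ, mul_inv]; ring

lemma moderate_of_requiv (hρ : IsGauge ρ) {E : Type*} [NormedAddCommGroup E]
    {x a : ℝ → E} (hx : Moderate ρ x) (h : REquiv ρ x a) : Moderate ρ a := by
  obtain ⟨N, hN⟩ := hx
  refine ⟨N+1, ?_⟩
  refine evsmall_mono
    (evsmall_and (evsmall_and hN (h 0)) (gauge_lt hρ (by norm_num : (0:ℝ) < 1/2))) ?_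
  rintro ε hε hε' ⟨⟨hn, hz⟩, hhalf⟩
  have hρε : 0 < ρ ε := hρ.pos ε ⟨hε, hε'⟩
  have : ‖a ε‖ ≤ ‖x ε‖ + ‖x ε - a ε‖ := by
    calc ‖a ε‖ = ‖x ε - (x ε - a ε)‖ := by rw [sub_sub_cancel]
      _ ≤ ‖x ε‖ + ‖x ε - a ε‖ := norm_sub_le _ _
  have hz' : ‖x ε - a ε‖ ≤ 1 := by simpa using hz
  calc ‖a ε‖ ≤ ρ ε ^ (-(N:ℤ)) + 1 := by linarith
    _ ≤ ρ ε ^ (-((N+1:ℕ):ℤ)) := zpow_bound hρε hhalf N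

end Helpers

/-- distance characterization of membership in internal and strongly
internal sets (Theorem `thm:strongMembershipAndDistanceComplement` (i),(ii)). -/
theorem stmt_2 {ρ : ℝ → ℝ} (hρ : IsGauge ρ) {n : ℕ} (A : ℝ → Set (RVec n))
    (x : ℝ → RVec n) (hx : Moderate ρ x) :
    (RC.mk ⟨x, hx⟩ ∈ InternalSet ρ A ↔
      ∀ q : ℝ, 0 < q →
        EvSmall (fun ε => EMetric.infEdist (x ε) (A ε) ≤ ENNReal.ofReal (ρ ε ^ q))) ∧
    (RC.mk ⟨x, hx⟩ ∈ StrongSet ρ A ↔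
      ∃ q : ℝ, 0 < q ∧
        EvSmall (fun ε => ENNReal.ofReal (ρ ε ^ q) < EMetric.infEdist (x ε) (A ε)ᶜ)) := by
  classical
  constructor
  · constructor
    · rintro ⟨a, ha, hmem⟩ q hq
      have heq : REquiv ρ a.1 x := rc_exact hρ ha
      refine evsmall_mono (evsmall_and (heq ⌈q⌉₊) hmem) ?_
      rintro ε hε hε1 ⟨hnorm, hA⟩
      have hρε : 0 < ρ ε := hρ.pos ε ⟨hε, hε1⟩
      have hρ1 : ρ ε ≤ 1 := hρ.le_one ε ⟨hε, hε1⟩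
      refine le_trans (EMetric.infEdist_le_edist_of_mem hA) ?_
      rw [edist_dist]
      refine ENNReal.ofReal_le_ofReal ?_
      rw [dist_eq_norm]
      calc ‖x ε - a.1 ε‖ = ‖a.1 ε - x ε‖ := norm_sub_rev _ _
        _ ≤ ρ ε ^ (⌈q⌉₊) := hnorm
        _ = ρ ε ^ ((⌈q⌉₊ : ℝ)) := (Real.rpow_natCast _ _).symm
        _ ≤ ρ ε ^ q := Real.rpow_le_rpow_of_exponent_ge hρε hρ1 (Nat.le_ceil q)
    · intro hq
      set a : ℝ → RVec n := fun ε =>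
        if h : ∃ y ∈ A ε, edist (x ε) y <
            EMetric.infEdist (x ε) (A ε) + ENNReal.ofReal (ρ ε ^ (1/ε))
        then h.choose else x ε with ha_def
      have key : ∀ m : ℕ, EvSmall fun ε => ‖x ε - a ε‖ ≤ ρ ε ^ m ∧ a ε ∈ A ε := by
        intro m
        have h1 := hq ((m:ℝ)+1) (by positivity)
        have h2 := gauge_lt hρ (by norm_num : (0:ℝ) < 1/2)
        have h3 := evsmall_le (by positivity : (0:ℝ) < 1/((m:ℝ)+1))
        refine evsmall_mono (evsmall_and (evsmall_and h1 h2) h3) ?_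
        rintro ε hε hε1 ⟨⟨hd, hhalf⟩, hle⟩
        have hρε : 0 < ρ ε := hρ.pos ε ⟨hε, hε1⟩
        have hρ1 : ρ ε ≤ 1 := hρ.le_one ε ⟨hε, hε1⟩
        have hexp : (m:ℝ)+1 ≤ 1/ε := by
          rw [le_div_iff₀ hε]
          rw [le_div_iff₀ (by positivity : (0:ℝ) < (m:ℝ)+1)] at hle
          linarith
        have hrb : ρ ε ^ (1/ε) ≤ ρ ε ^ ((m:ℝ)+1) :=
          Real.rpow_le_rpow_of_exponent_ge hρε hρ1 hexp
        have hpos : 0 < ρ ε ^ (1/ε) := Real.rpow_pos_of_pos hρε _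
        have hEx : ∃ y ∈ A ε, edist (x ε) y <
            EMetric.infEdist (x ε) (A ε) + ENNReal.ofReal (ρ ε ^ (1/ε)) := by
          rw [← EMetric.infEdist_lt_iff]
          exact ENNReal.lt_add_right (hd.trans_lt ENNReal.ofReal_lt_top).ne
            (ENNReal.ofReal_pos.2 hpos).ne'
        have haε : a ε = hEx.choose := by simp only [ha_def]; rw [dif_pos hEx]
        obtain ⟨hyA, hdy⟩ := hEx.choose_spec
        refine ⟨?_, haε ▸ hyA⟩
        rw [haε]
        have hlt : edist (x ε) hEx.choose <
            ENNReal.ofReal (ρ ε ^ ((m:ℝ)+1) + ρ ε ^ ((m:ℝ)+1)) := by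
          rw [ENNReal.ofReal_add (by positivity) (by positivity)]
          exact hdy.trans_le (add_le_add hd (ENNReal.ofReal_le_ofReal hrb))
        rw [edist_lt_ofReal, dist_eq_norm] at hlt
        have hcast : ρ ε ^ ((m:ℝ)+1) = ρ ε ^ (m+1) := by
          rw [show ((m:ℝ)+1) = ((m+1 : ℕ):ℝ) by push_cast; ring, Real.rpow_natCast]
        rw [hcast] at hlt
        exact hlt.le.trans (two_pow_succ_le hρε hhalf m)
      have hre : REquiv ρ x a := fun m => evsmall_mono (key m) (fun _ _ _ h => h.1)
      have hamod : Moderate ρ a := moderate_of_requiv hρ hx hre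
      exact ⟨⟨a, hamod⟩, Quot.sound (requiv_symm hre),
        evsmall_mono (key 0) (fun _ _ _ h => h.2)⟩
  · constructor
    · intro hmem
      by_contra hno
      push_neg at hno
      have hfail : ∀ (k:ℕ) (δ : ℝ), 0 < δ → δ ≤ 1 →
          ∃ ε, 0 < ε ∧ ε ≤ δ ∧
            EMetric.infEdist (x ε) (A ε)ᶜ ≤ ENNReal.ofReal (ρ ε ^ ((k:ℝ)+1)) := by
        intro k δ h0 h1
        have h := hno ((k:ℝ)+1) (by positivity)
        rw [EvSmall] at h; push_neg at h
        obtain ⟨ε, hε1, hε2, hP⟩ := h δ h0 h1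
        exact ⟨ε, hε1, hε2, hP⟩
      have step : ∀ (k : ℕ) (e : {e : ℝ // 0 < e}),
          ∃ e' : {e : ℝ // 0 < e}, e'.1 ≤ e.1/2 ∧ e'.1 ≤ 1/((k:ℝ)+1) ∧
            EMetric.infEdist (x e'.1) (A e'.1)ᶜ ≤ ENNReal.ofReal (ρ e'.1 ^ ((k:ℝ)+1)) := by
        intro k e
        have hk0 : (0:ℝ) < (k:ℝ)+1 := by positivity
        have h0 : 0 < min (e.1/2) (1/((k:ℝ)+1)) := lt_min (half_pos e.2) (by positivity)
        have h1 : min (e.1/2) (1/((k:ℝ)+1)) ≤ 1 := (min_le_right _ _).trans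
          (by rw [div_le_one hk0]; linarith [(Nat.cast_nonneg k : (0:ℝ) ≤ (k:ℝ))])
        obtain ⟨ε, a0, a1, a2⟩ := hfail k _ h0 h1
        exact ⟨⟨ε, a0⟩, a1.trans (min_le_left _ _), a1.trans (min_le_right _ _), a2⟩
      let F : ℕ → {e : ℝ // 0 < e} :=
        fun k => Nat.rec ⟨1, one_pos⟩ (fun k ih => (step k ih).choose) k
      have hF : ∀ k, (F (k+1)).1 ≤ (F k).1/2 ∧ (F (k+1)).1 ≤ 1/((k:ℝ)+1) ∧
          EMetric.infEdist (x (F (k+1)).1) (A (F (k+1)).1)ᶜ ≤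
            ENNReal.ofReal (ρ (F (k+1)).1 ^ ((k:ℝ)+1)) :=
        fun k => (step k (F k)).choose_spec
      set s : ℕ → ℝ := fun k => (F (k+1)).1 with hs_def
      have hspos : ∀ k, 0 < s k := fun k => (F (k+1)).2
      have hsle : ∀ k, s k ≤ 1/((k:ℝ)+1) := fun k => (hF k).2.1
      have hsle1 : ∀ k, s k ≤ 1 := fun k => (hsle k).trans
        (by rw [div_le_one (by positivity)]; linarith [(Nat.cast_nonneg k : (0:ℝ) ≤ (k:ℝ))])
      have hanti : StrictAnti s := strictAnti_nat_of_succ_lt (fun k => by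
        have h1 : s (k+1) ≤ s k / 2 := (hF (k+1)).1
        have h2 := hspos k
        linarith)
      have hsd : ∀ k, EMetric.infEdist (x (s k)) (A (s k))ᶜ ≤
          ENNReal.ofReal (ρ (s k) ^ ((k:ℝ)+1)) := fun k => (hF k).2.2
      have hb : ∀ k, ∃ y ∈ (A (s k))ᶜ, edist (x (s k)) y <
          ENNReal.ofReal (ρ (s k) ^ ((k:ℝ)+1)) + ENNReal.ofReal (ρ (s k) ^ ((k:ℝ)+1)) := by
        intro k
        have hρs : 0 < ρ (s k) := hρ.pos _ ⟨hspos k, hsle1 k⟩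
        rw [← EMetric.infEdist_lt_iff]
        refine lt_of_le_of_lt (hsd k) ?_
        exact ENNReal.lt_add_right ENNReal.ofReal_ne_top
          (ENNReal.ofReal_pos.2 (Real.rpow_pos_of_pos hρs _)).ne'
      set b : ℕ → RVec n := fun k => (hb k).choose with hb_def
      have hbspec : ∀ k, b k ∈ (A (s k))ᶜ ∧ edist (x (s k)) (b k) <
          ENNReal.ofReal (ρ (s k) ^ ((k:ℝ)+1)) + ENNReal.ofReal (ρ (s k) ^ ((k:ℝ)+1)) :=
        fun k => (hb k).choose_spec
      set a : ℝ → RVec n := fun ε => if h : ∃ k, s k = ε then b h.choose else x ε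
        with ha_def
      have hre : REquiv ρ x a := by
        intro m
        refine evsmall_mono (evsmall_and (evsmall_le (hspos (m+1)))
          (gauge_lt hρ (by norm_num : (0:ℝ) < 1/2))) ?_
        rintro ε hε hε1 ⟨hles, hhalf⟩
        have hρε : 0 < ρ ε := hρ.pos ε ⟨hε, hε1⟩
        have hρ1 : ρ ε ≤ 1 := hρ.le_one ε ⟨hε, hε1⟩
        by_cases h : ∃ k, s k = ε
        · have haε : a ε = b h.choose := by simp only [ha_def]; rw [dif_pos h]
          have hjs : s h.choose = ε := h.choose_spec
          have hjge : m + 1 ≤ h.choose := by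
            by_contra hc
            push_neg at hc
            have hlt2 : s (m+1) < s h.choose := hanti hc
            rw [hjs] at hlt2
            linarith
          have hbd := (hbspec h.choose).2
          rw [hjs] at hbd
          rw [← ENNReal.ofReal_add (by positivity) (by positivity), edist_lt_ofReal,
            dist_eq_norm] at hbd
          rw [haε]
          have hmono : ρ ε ^ ((h.choose:ℝ)+1) ≤ ρ ε ^ ((m:ℝ)+1) :=
            Real.rpow_le_rpow_of_exponent_ge hρε hρ1 (by
              have hmj : (m:ℝ) ≤ (h.choose:ℝ) := by exact_mod_cast (by omega : m ≤ h.choose)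
              linarith)
          have hcast : ρ ε ^ ((m:ℝ)+1) = ρ ε ^ (m+1) := by
            rw [show ((m:ℝ)+1) = ((m+1 : ℕ):ℝ) by push_cast; ring, Real.rpow_natCast]
          calc ‖x ε - b h.choose‖
              ≤ ρ ε ^ ((h.choose:ℝ)+1) + ρ ε ^ ((h.choose:ℝ)+1) := hbd.le
            _ ≤ ρ ε ^ ((m:ℝ)+1) + ρ ε ^ ((m:ℝ)+1) := add_le_add hmono hmono
            _ = ρ ε ^ (m+1) + ρ ε ^ (m+1) := by rw [hcast]
            _ ≤ ρ ε ^ m := two_pow_succ_le hρε hhalf m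
        · have haε : a ε = x ε := by simp only [ha_def]; rw [dif_neg h]
          rw [haε, sub_self, norm_zero]
          positivity
      have hamod : Moderate ρ a := moderate_of_requiv hρ hx hre
      have hev := hmem ⟨a, hamod⟩ (Quot.sound (requiv_symm hre))
      obtain ⟨ε₀, h0, h1, hall⟩ := hev
      obtain ⟨k, hk⟩ := exists_nat_gt (1/ε₀)
      have hsk : s k ≤ ε₀ := by
        refine (hsle k).trans ?_
        rw [div_le_iff₀ (by positivity)]
        rw [div_lt_iff₀ h0] at hk
        nlinarith [h0.le]
      have hmemA := hall (s k) (hspos k) hsk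
      have hex : ∃ k', s k' = s k := ⟨k, rfl⟩
      have haeq : a (s k) = b hex.choose := by simp only [ha_def]; rw [dif_pos hex]
      have hnb := (hbspec hex.choose).1
      rw [hex.choose_spec] at hnb
      have hmemA' : a (s k) ∈ A (s k) := hmemA
      rw [haeq] at hmemA'
      exact hnb hmemA'
    · rintro ⟨q, hq, hev⟩ a ha
      have heq : REquiv ρ a.1 x := rc_exact hρ ha
      refine evsmall_mono (evsmall_and (heq ⌈q⌉₊) hev) ?_
      rintro ε hε hε1 ⟨hnorm, hlt⟩
      have hρε : 0 < ρ ε := hρ.pos ε ⟨hε, hε1⟩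
      have hρ1 : ρ ε ≤ 1 := hρ.le_one ε ⟨hε, hε1⟩
      by_contra hnA
      have h1 : EMetric.infEdist (x ε) (A ε)ᶜ ≤ edist (x ε) (a.1 ε) :=
        EMetric.infEdist_le_edist_of_mem hnA
      have h2 : edist (x ε) (a.1 ε) ≤ ENNReal.ofReal (ρ ε ^ q) := by
        rw [edist_dist]
        refine ENNReal.ofReal_le_ofReal ?_
        rw [dist_eq_norm]
        calc ‖x ε - a.1 ε‖ = ‖a.1 ε - x ε‖ := norm_sub_rev _ _
          _ ≤ ρ ε ^ (⌈q⌉₊) := hnorm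
          _ = ρ ε ^ ((⌈q⌉₊ : ℝ)) := (Real.rpow_natCast _ _).symm
          _ ≤ ρ ε ^ q := Real.rpow_le_rpow_of_exponent_ge hρε hρ1 (Nat.le_ceil q)
      exact absurd (h1.trans h2) (not_le.2 hlt)
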